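/- arXiv:2505.18804 — 4 statements merged into one kernel-verified Lean document; each statement's English description precedes it below -/
import Mathlib

section
/- Let X be an n-valued group with finite generating sets S and S', and let y, y' ∈ X. Then there exists a positive integer C such that for every natural number r, |B_S(y, r / C)| ≤ |B_{S'}(y', r)| ≤ |B_S(y, C·r)|, where r / C denotes integer division and |·| denotes cardinality of the ball. -/
/-- An `n`-valued group: multiplication takes values in `n`-element multisets. -/
structure NValuedGroup (n : ℕ) (X : Type*) where
  mul : X → X → Multiset X
  e : X
  inv : X → X
  one_le : 1 ≤ n
  card_mul : ∀ x y, (mul x y).card = n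
  assoc : ∀ x y z, (mul x y).bind (fun t => mul t z) = (mul y z).bind (fun t => mul x t)
  e_mul : ∀ x, mul e x = Multiset.replicate n x
  mul_e : ∀ x, mul x e = Multiset.replicate n x
  inv_mul : ∀ x, e ∈ mul (inv x) x
  mul_inv : ∀ x, e ∈ mul x (inv x)

variable {n : ℕ} {X : Type*}

/-- The multiset `x * s₁ * ⋯ * s_k` (iterated left-to-right, starting from `{x}`). -/
def NValuedGroup.wordProd (G : NValuedGroup n X) (x : X) (l : List X) : Multiset X :=
  l.foldl (fun m s => m.bind (fun t => G.mul t s)) {x}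

/-- The ball `B_S(x, r)`: elements lying in `Set(x * s₁ * ⋯ * s_m)` for some `m ≤ r`,
`s₁, …, s_m ∈ S`. -/
def NValuedGroup.ball (G : NValuedGroup n X) (S : Set X) (x : X) (r : ℕ) : Set X :=
  {y | ∃ l : List X, l.length ≤ r ∧ (∀ s ∈ l, s ∈ S) ∧ y ∈ G.wordProd x l}

/-- `S` generates `X`: every element lies in `Set(s₁ * ⋯ * s_m)` for some `m ≥ 1`,
`s₁, …, s_m ∈ S`. -/
def NValuedGroup.IsGenSet (G : NValuedGroup n X) (S : Set X) : Prop :=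
  ∀ x : X, ∃ s₀ ∈ S, ∃ l : List X, (∀ s ∈ l, s ∈ S) ∧ x ∈ G.wordProd s₀ l

/-!
Since `S` generates, every `c` lies in `s₀ * w` for some word `s₀ w` in `S`, and associativity
turns this into `x * c ⊆ Set(x * s₀ * w)` for all `x`. Thus each generator of the finite set `S'`
is simulated by a fixed word in `S`, a word of length `r` in `S'` by one of length at most `K r`
in `S`, and a fixed word leads from `y` to `y'` (through `e`, using inverses). Hence
`B_{S'}(y', r) ⊆ B_S(y, d + K r)`, and symmetrically; the balls are finite, so inclusions give
the cardinality bounds.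
-/

lemma List.finite_setOf_length_le_forall_mem {α : Type*} {S : Set α} (hS : S.Finite) (r : ℕ) :
    {l : List α | l.length ≤ r ∧ ∀ s ∈ l, s ∈ S}.Finite := by
  have := hS.to_subtype
  refine ((List.finite_length_le S r).image (List.map Subtype.val)).subset ?_
  rintro l ⟨hl, hlS⟩
  lift l to List S using hlS
  exact ⟨l, by simpa using hl, rfl⟩

namespace NValuedGroup

variable (G : NValuedGroup n X)

@[simp]
lemma wordProd_nil (x : X) : G.wordProd x [] = {x} := rfl

lemma wordProd_append_singleton (x s : X) (l : List X) :
    G.wordProd x (l ++ [s]) = (G.wordProd x l).bind (G.mul · s) := by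
  simp only [wordProd, List.foldl_append, List.foldl_cons, List.foldl_nil]

@[simp]
lemma wordProd_singleton (x s : X) : G.wordProd x [s] = G.mul x s := by
  simpa using G.wordProd_append_singleton x s []

lemma wordProd_append (x : X) (l₁ l₂ : List X) :
    G.wordProd x (l₁ ++ l₂) = (G.wordProd x l₁).bind (G.wordProd · l₂) := by
  induction l₂ using List.reverseRecOn with
  | nil => simpa using (Multiset.bind_singleton _ id).symm
  | append_singleton l₂ s ih =>
    simp only [← List.append_assoc, wordProd_append_singleton, ih, Multiset.bind_assoc]

lemma mem_wordProd_append {x z w : X} {l₁ l₂ : List X}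
    (h₁ : z ∈ G.wordProd x l₁) (h₂ : w ∈ G.wordProd z l₂) : w ∈ G.wordProd x (l₁ ++ l₂) := by
  rw [wordProd_append, Multiset.mem_bind]
  exact ⟨z, h₁, h₂⟩

lemma bind_mul_wordProd (x a : X) (l : List X) :
    (G.wordProd a l).bind (G.mul x) = G.wordProd x (a :: l) := by
  induction l using List.reverseRecOn with
  | nil => simp
  | append_singleton l s ih =>
    rw [← List.cons_append, wordProd_append_singleton, wordProd_append_singleton, ← ih,
      Multiset.bind_assoc, Multiset.bind_assoc]
    exact Multiset.bind_congr fun c _ => (G.assoc x c s).symm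

lemma mem_wordProd_cons_of_mem_mul {x z a c : X} {l : List X}
    (hc : c ∈ G.wordProd a l) (hz : z ∈ G.mul x c) : z ∈ G.wordProd x (a :: l) := by
  rw [← bind_mul_wordProd]
  exact Multiset.mem_bind.2 ⟨c, hc, hz⟩

lemma mem_e_mul (x : X) : x ∈ G.mul G.e x := by
  rw [G.e_mul]
  exact Multiset.mem_replicate.2 ⟨by have := G.one_le; omega, rfl⟩

variable {G} {S : Set X}

lemma IsGenSet.exists_word_mul_subset (hS : G.IsGenSet S) (c : X) :
    ∃ w : List X, (∀ s ∈ w, s ∈ S) ∧ ∀ x, ∀ z ∈ G.mul x c, z ∈ G.wordProd x w := by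
  obtain ⟨s₀, hs₀, l, hlS, hc⟩ := hS c
  refine ⟨s₀ :: l, ?_, fun x z hz => G.mem_wordProd_cons_of_mem_mul hc hz⟩
  simpa using ⟨hs₀, hlS⟩

/-- Pass through `e`: it lies in `x * inv x`, and `t` lies in `e * t`. -/
lemma IsGenSet.exists_word_mem_wordProd (hS : G.IsGenSet S) (x t : X) :
    ∃ w : List X, (∀ s ∈ w, s ∈ S) ∧ t ∈ G.wordProd x w := by
  obtain ⟨w₁, hw₁S, hw₁⟩ := hS.exists_word_mul_subset (G.inv x)
  obtain ⟨w₂, hw₂S, hw₂⟩ := hS.exists_word_mul_subset t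
  refine ⟨w₁ ++ w₂, ?_, G.mem_wordProd_append (hw₁ x _ (G.mul_inv x)) (hw₂ _ _ (G.mem_e_mul t))⟩
  simpa using fun s hs => hs.elim (hw₁S s) (hw₂S s)

/-- `K` is the length of the longest word in `S` simulating right multiplication by an element
of `S'`. -/
lemma IsGenSet.exists_word_length_le (hS : G.IsGenSet S) {S' : Set X} (hS' : S'.Finite) :
    ∃ K : ℕ, ∀ (x z : X) (l : List X), (∀ s ∈ l, s ∈ S') → z ∈ G.wordProd x l →
      ∃ w : List X, (∀ s ∈ w, s ∈ S) ∧ w.length ≤ K * l.length ∧ z ∈ G.wordProd x w := by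
  choose f hfS hf using hS.exists_word_mul_subset
  refine ⟨hS'.toFinset.sup (fun s => (f s).length), fun x z l hlS hz => ?_⟩
  induction l using List.reverseRecOn generalizing z with
  | nil => exact ⟨[], by simp, by simp, hz⟩
  | append_singleton l s ih =>
    rw [wordProd_append_singleton, Multiset.mem_bind] at hz
    obtain ⟨u, hu, hzu⟩ := hz
    have hs : s ∈ S' := hlS s (by simp)
    obtain ⟨w, hwS, hwlen, hw⟩ := ih u (fun t ht => hlS t (by simp [ht])) hu
    have hfs : (f s).length ≤ hS'.toFinset.sup (fun s => (f s).length) :=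
      Finset.le_sup (f := fun s => (f s).length) (hS'.mem_toFinset.2 hs)
    refine ⟨w ++ f s, ?_, ?_, G.mem_wordProd_append hw (hf s u z hzu)⟩
    · simpa using fun t ht => ht.elim (hwS t) (hfS s t)
    · simp only [List.length_append, List.length_singleton, Nat.mul_succ]
      omega

lemma ball_mono (x : X) {r r' : ℕ} (h : r ≤ r') : G.ball S x r ⊆ G.ball S x r' :=
  fun _ ⟨l, hl, hlS, hz⟩ => ⟨l, hl.trans h, hlS, hz⟩

@[simp]
lemma ball_zero (x : X) : G.ball S x 0 = {x} := by
  ext z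
  simp [ball, eq_comm]

lemma ball_finite (hS : S.Finite) (x : X) (r : ℕ) : (G.ball S x r).Finite := by
  refine ((List.finite_setOf_length_le_forall_mem hS r).biUnion
    fun l _ => Multiset.finite_toSet (G.wordProd x l)).subset ?_
  rintro z ⟨l, hl, hlS, hz⟩
  exact Set.mem_biUnion ⟨hl, hlS⟩ hz

lemma card_ball_mono (hS : S.Finite) (x : X) {r r' : ℕ} (h : r ≤ r') :
    Nat.card (G.ball S x r) ≤ Nat.card (G.ball S x r') :=
  Nat.card_mono (G.ball_finite hS x r') (G.ball_mono x h)

lemma IsGenSet.ball_subset_ball (hS : G.IsGenSet S) {S' : Set X} (hS' : S'.Finite) (y y' : X) :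
    ∃ d K : ℕ, ∀ r, G.ball S' y' r ⊆ G.ball S y (d + K * r) := by
  obtain ⟨w₀, hw₀S, hw₀⟩ := hS.exists_word_mem_wordProd y y'
  obtain ⟨K, hK⟩ := hS.exists_word_length_le hS'
  refine ⟨w₀.length, K, fun r z ⟨l, hl, hlS, hz⟩ => ?_⟩
  obtain ⟨w, hwS, hwlen, hw⟩ := hK y' z l hlS hz
  refine ⟨w₀ ++ w, ?_, ?_, G.mem_wordProd_append hw₀ hw⟩
  · simpa using hwlen.trans (Nat.mul_le_mul_left K hl)
  · simpa using fun t ht => ht.elim (hw₀S t) (hwS t)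

lemma IsGenSet.exists_card_ball_le (hS : G.IsGenSet S) (hSfin : S.Finite) {S' : Set X}
    (hS' : S'.Finite) (y y' : X) :
    ∃ K : ℕ, ∀ r, Nat.card (G.ball S' y' r) ≤ Nat.card (G.ball S y (K * r)) := by
  obtain ⟨d, K, hsub⟩ := hS.ball_subset_ball hS' y y'
  refine ⟨d + K, fun r => ?_⟩
  rcases Nat.eq_zero_or_pos r with rfl | hr
  · simp
  · refine Nat.card_mono (G.ball_finite hSfin y _) ((hsub r).trans (G.ball_mono y ?_))
    nlinarith

end NValuedGroup

/-- Growth functions with respect to two finite generating sets and two centers are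
equivalent. -/
theorem ball_card_equiv_of_genSets (G : NValuedGroup n X) (S S' : Set X)
    (hSfin : S.Finite) (hS'fin : S'.Finite)
    (hSgen : G.IsGenSet S) (hS'gen : G.IsGenSet S') (y y' : X) :
    ∃ C : ℕ, 0 < C ∧ ∀ r : ℕ,
      Nat.card (G.ball S y (r / C)) ≤ Nat.card (G.ball S' y' r) ∧
      Nat.card (G.ball S' y' r) ≤ Nat.card (G.ball S y (C * r)) := by
  obtain ⟨K, hK⟩ := hSgen.exists_card_ball_le hSfin hS'fin y y'
  obtain ⟨K', hK'⟩ := hS'gen.exists_card_ball_le hS'fin hSfin y' y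
  refine ⟨K + K' + 1, by omega, fun r => ⟨?_, ?_⟩⟩
  · refine (hK' _).trans (G.card_ball_mono hS'fin y' ?_)
    calc K' * (r / (K + K' + 1)) ≤ (K + K' + 1) * (r / (K + K' + 1)) :=
          Nat.mul_le_mul_right _ (by omega)
      _ ≤ r := Nat.mul_div_le r _
  · exact (hK r).trans (G.card_ball_mono hSfin y (Nat.mul_le_mul_right r (by omega)))
end

section
/- Let G be a finitely generated group with a finite symmetric generating set S (S = S⁻¹) that contains a nilpotent subgroup of finite index, and let A be a finite subgroup of Aut(G). Let T = {a(s) : s ∈ S, a ∈ A} ⊆ G. Then there exist a constant C > 0 and a natural number k such that for every r ≥ 1, the number of A-orbits meeting B⁺_T(r) — equivalently Nat.card (π '' B⁺_T(r)), which equals the cardinality of the ball of radius r centered at the unit in the Cayley graph of the n-valued coset group X = (G, A) with respect to the generating set π(S) — is at most C·r^k. In other words, the coset group of a finitely generated virtually nilpotent group by a finite group of automorphisms has polynomial growth. -/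
/-!
Commutator collection. Let `U` be a finite set in a group in which the iterated commutators of
weight `c + 1` built from `U` vanish, and list `U` as `x₁, …, x_m`. Moving each letter of a word of
length `N` in `U` to its place in `x₁^a₁ ⋯ x_m^a_m` creates commutators, conjugating these by words
creates commutators of higher weight, and this stops at weight `c + 1`. So every such word equals
`x₁^a₁ ⋯ x_m^a_m · τ` with `Σ aᵢ = N` and `τ` a word of length polynomial in `N` in the finitely
many iterated commutators of `U`. These lie in the commutator subgroup, whose class is smaller, and
induction on the class gives polynomial growth for finite subsets of a nilpotent subgroup.
A finite-index subgroup `H` with a right transversal `R ∋ 1` lifts this to `G` by Schreier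
rewriting, `B⁺_T(n) ⊆ B⁺_U(n) · R` with `U = H ∩ R T R⁻¹`, and passing to `A`-orbits can only
merge elements of a ball.
-/

variable {G : Type*} [Group G]

/-- `W T r`: the set of products of exactly `r` elements of `T` (with `W T 0 = {1}`). -/
def wordSet (T : Set G) (r : ℕ) : Set G :=
  {x | ∃ l : List G, l.length = r ∧ (∀ t ∈ l, t ∈ T) ∧ l.prod = x}

/-- The monoid ball `B⁺_T(r) = ⋃_{m=0}^{r} W_m(T)`. -/
def monoidBall (T : Set G) (r : ℕ) : Set G :=
  {x | ∃ l : List G, l.length ≤ r ∧ (∀ t ∈ l, t ∈ T) ∧ l.prod = x}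

/-- The monoid sphere `S⁺_T(r) = B⁺_T(r) \ B⁺_T(r-1)`. -/
def monoidSphere (T : Set G) (r : ℕ) : Set G := monoidBall T r \ monoidBall T (r - 1)

/-- `π : G → G/A`, sending `g` to its `A`-orbit `{a(g) : a ∈ A}`. -/
def orbitMap (A : Subgroup (MulAut G)) : G → Set G :=
  fun g => {x | ∃ a ∈ A, a g = x}

open scoped commutatorElement Pointwise

section MonoidBall

variable {T T' : Set G} {r s : ℕ}

theorem one_mem_monoidBall (T : Set G) (r : ℕ) : (1 : G) ∈ monoidBall T r :=
  ⟨[], by simp⟩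

theorem monoidBall_mono (h : r ≤ s) : monoidBall T r ⊆ monoidBall T s :=
  fun _ ⟨l, hl, hT, hprod⟩ => ⟨l, hl.trans h, hT, hprod⟩

theorem mem_monoidBall_one {t : G} (ht : t ∈ T) : t ∈ monoidBall T 1 :=
  ⟨[t], by simp, by simpa, by simp⟩

theorem mul_mem_monoidBall {a b : G} (ha : a ∈ monoidBall T r) (hb : b ∈ monoidBall T s) :
    a * b ∈ monoidBall T (r + s) := by
  obtain ⟨l, hl, hT, rfl⟩ := ha
  obtain ⟨l', hl', hT', rfl⟩ := hb
  refine ⟨l ++ l', by simpa using Nat.add_le_add hl hl', fun t ht => ?_, List.prod_append⟩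
  rcases List.mem_append.1 ht with ht | ht
  exacts [hT t ht, hT' t ht]

theorem pow_mem_monoidBall {t : G} (ht : t ∈ T) (k : ℕ) : t ^ k ∈ monoidBall T k :=
  ⟨List.replicate k t, by simp, fun _ h => List.eq_of_mem_replicate h ▸ ht, by simp⟩

theorem list_prod_mem_monoidBall {l : List G} (hl : ∀ x ∈ l, x ∈ monoidBall T s) :
    l.prod ∈ monoidBall T (l.length * s) := by
  induction l with
  | nil => exact one_mem_monoidBall T _
  | cons x l ih =>
    rw [List.prod_cons, List.length_cons, Nat.succ_mul, add_comm]
    exact mul_mem_monoidBall (hl x List.mem_cons_self)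
      (ih fun y hy => hl y (List.mem_cons_of_mem x hy))

theorem conj_mem_monoidBall {g v : G} (h : ∀ t ∈ T, g⁻¹ * t * g ∈ monoidBall T' s)
    (hv : v ∈ monoidBall T r) : g⁻¹ * v * g ∈ monoidBall T' (r * s) := by
  have hconj : ∀ l : List G, g⁻¹ * l.prod * g = (l.map fun t => g⁻¹ * t * g).prod := by
    intro l
    induction l with
    | nil => simp
    | cons x l ih => rw [List.prod_cons, List.map_cons, List.prod_cons, ← ih]; group
  obtain ⟨l, hl, hT, rfl⟩ := hv
  rw [hconj]
  refine monoidBall_mono (Nat.mul_le_mul_right s (by simpa using hl))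
    (list_prod_mem_monoidBall fun x hx => ?_)
  obtain ⟨t, ht, rfl⟩ := List.mem_map.1 hx
  exact h t (hT t ht)

theorem monoidBall_finite (hT : T.Finite) (r : ℕ) : (monoidBall T r).Finite := by
  have : Finite T := hT
  refine ((List.finite_length_le T r).image fun l => (l.map Subtype.val).prod).subset ?_
  rintro _ ⟨l, hl, hT, rfl⟩
  exact ⟨l.pmap Subtype.mk hT, by simpa using hl, by simp [List.map_pmap]⟩

end MonoidBall

/-- The inverses make `x⁻¹ * y * x = y * ⁅y⁻¹, x⁻¹⁆`: conjugating a letter by an element of `U`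
multiplies it by a letter of the next weight. -/
def iteratedCommutators (U : Set G) : ℕ → Set G
  | 0 => U
  | w + 1 => Set.image2 (fun y x => ⁅y⁻¹, x⁻¹⁆) (iteratedCommutators U w) U

/-- The iterated commutators of weights `2, …, c + 1`. -/
def commutatorLetters (U : Set G) (c : ℕ) : Set G :=
  ⋃ w < c, iteratedCommutators U (w + 1)

section IteratedCommutators

variable {U : Set G} {c : ℕ}

theorem iteratedCommutators_finite (hU : U.Finite) : ∀ w, (iteratedCommutators U w).Finite
  | 0 => hU
  | w + 1 => (iteratedCommutators_finite hU w).image2 _ hU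

theorem commutatorLetters_finite (hU : U.Finite) (c : ℕ) : (commutatorLetters U c).Finite :=
  (Set.finite_Iio c).biUnion fun w _ => iteratedCommutators_finite hU (w + 1)

theorem iteratedCommutators_subset_commutatorLetters {w : ℕ} (hw : w < c) :
    iteratedCommutators U (w + 1) ⊆ commutatorLetters U c :=
  Set.subset_biUnion_of_mem (u := fun w => iteratedCommutators U (w + 1)) hw

theorem iteratedCommutators_subset_lowerCentralSeries {S : Subgroup G} (hUS : U ⊆ S) :
    ∀ w, iteratedCommutators U w ⊆ S.lowerCentralSeries w
  | 0 => hUS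
  | w + 1 => by
    rintro _ ⟨y, hy, x, hx, rfl⟩
    exact Subgroup.commutator_mem_commutator
      (inv_mem (iteratedCommutators_subset_lowerCentralSeries hUS w hy)) (inv_mem (hUS hx))

theorem commutatorLetters_subset_lowerCentralSeries_one {S : Subgroup G} (hUS : U ⊆ S) (c : ℕ) :
    commutatorLetters U c ⊆ S.lowerCentralSeries 1 :=
  Set.iUnion₂_subset fun w _ =>
    (iteratedCommutators_subset_lowerCentralSeries hUS (w + 1)).trans
      (S.lowerCentralSeries_antitone (Nat.le_add_left 1 w))

theorem iteratedCommutators_subset_one (hU : iteratedCommutators U c ⊆ {1}) {w : ℕ}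
    (hw : c ≤ w) : iteratedCommutators U w ⊆ {1} := by
  induction w, hw using Nat.le_induction with
  | base => exact hU
  | succ w _ ih =>
    rintro _ ⟨y, hy, x, -, rfl⟩
    simp [Set.mem_singleton_iff.1 (ih hy)]

theorem conj_list_prod_mem_monoidBall_commutatorLetters (hU : iteratedCommutators U c ⊆ {1})
    {u : List G} (hu : ∀ x ∈ u, x ∈ U) {w : ℕ} {y : G}
    (hy : y ∈ iteratedCommutators U (w + 1)) :
    (u.prod)⁻¹ * y * u.prod ∈
      monoidBall (commutatorLetters U c) ((u.length + 1) ^ (c - w)) := by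
  have hvanish : ∀ {w : ℕ} {y : G}, c ≤ w + 1 → y ∈ iteratedCommutators U (w + 1) →
      ∀ (g : G) (n : ℕ), g⁻¹ * y * g ∈ monoidBall (commutatorLetters U c) n := by
    intro w y hw hy g n
    rw [Set.mem_singleton_iff.1 (iteratedCommutators_subset_one hU hw hy)]
    simpa using one_mem_monoidBall _ _
  induction u generalizing w y with
  | nil =>
    rcases lt_or_ge (w + 1) c with hw | hw
    · simpa using mem_monoidBall_one (iteratedCommutators_subset_commutatorLetters (by omega) hy)
    · exact hvanish hw hy _ _
  | cons x u ih =>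
    rcases lt_or_ge (w + 1) c with hw | hw
    swap
    · exact hvanish hw hy _ _
    have hx : x ∈ U := hu x List.mem_cons_self
    have hu' : ∀ x ∈ u, x ∈ U := fun t ht => hu t (List.mem_cons_of_mem x ht)
    set P := u.prod
    have hz : ⁅y⁻¹, x⁻¹⁆ ∈ iteratedCommutators U (w + 1 + 1) := ⟨y, hy, x, hx, rfl⟩
    have hsplit : (x * P)⁻¹ * y * (x * P) = (P⁻¹ * y * P) * (P⁻¹ * ⁅y⁻¹, x⁻¹⁆ * P) := by
      simp only [commutatorElement_def]
      group
    rw [List.prod_cons, hsplit]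
    refine monoidBall_mono ?_ (mul_mem_monoidBall (ih hu' hy) (ih hu' hz))
    obtain ⟨e, he⟩ : ∃ e, c - w = e + 1 := ⟨c - (w + 1), by omega⟩
    rw [he, show c - (w + 1) = e by omega, List.length_cons]
    calc (u.length + 1) ^ (e + 1) + (u.length + 1) ^ e = (u.length + 1) ^ e * (u.length + 2) := by
          ring
      _ ≤ (u.length + 2) ^ e * (u.length + 2) := by gcongr; omega
      _ = (u.length + 1 + 1) ^ (e + 1) := by ring

end IteratedCommutators

def powerProduct (L : List G) (a : List ℕ) : G :=
  (List.zipWith (· ^ ·) L a).prod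

@[simp]
theorem powerProduct_cons (x : G) (L : List G) (k : ℕ) (a : List ℕ) :
    powerProduct (x :: L) (k :: a) = x ^ k * powerProduct L a := by
  simp [powerProduct]

theorem powerProduct_replicate_zero (L : List G) :
    powerProduct L (List.replicate L.length 0) = 1 := by
  induction L with
  | nil => simp [powerProduct]
  | cons x L ih => simp [List.replicate_succ, ih]

theorem powerProduct_mem_monoidBall {U : Set G} {L : List G} (hL : ∀ x ∈ L, x ∈ U)
    (a : List ℕ) : powerProduct L a ∈ monoidBall U a.sum := by
  induction L generalizing a with
  | nil => simpa [powerProduct] using one_mem_monoidBall U _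
  | cons x L ih =>
    obtain _ | ⟨k, a⟩ := a
    · simpa [powerProduct] using one_mem_monoidBall U _
    rw [powerProduct_cons, List.sum_cons]
    exact mul_mem_monoidBall (pow_mem_monoidBall (hL x List.mem_cons_self) k)
      (ih (fun y hy => hL y (List.mem_cons_of_mem x hy)) a)

def powerProducts (L : List G) (N : ℕ) : Set G :=
  Set.range fun v : List.Vector (Fin (N + 1)) L.length => powerProduct L (v.toList.map Fin.val)

theorem card_powerProducts_le (L : List G) (N : ℕ) :
    Nat.card (powerProducts L N) ≤ (N + 1) ^ L.length := by
  refine (Finite.card_range_le _).trans_eq ?_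
  simp [Nat.card_eq_fintype_card, card_vector]

section Collection

variable {U : Set G} {c : ℕ}

theorem conj_mem_monoidBall_commutatorLetters (hU : iteratedCommutators U c ⊆ {1}) {g v : G}
    {n t : ℕ} (hg : g ∈ monoidBall U n) (hv : v ∈ monoidBall (commutatorLetters U c) t) :
    g⁻¹ * v * g ∈ monoidBall (commutatorLetters U c) (t * (n + 1) ^ c) := by
  obtain ⟨u, hun, hu, rfl⟩ := hg
  refine conj_mem_monoidBall (fun z hz => ?_) hv
  obtain ⟨w, -, hzw⟩ := Set.mem_iUnion₂.1 hz
  refine monoidBall_mono ?_ (conj_list_prod_mem_monoidBall_commutatorLetters hU hu hzw)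
  exact (Nat.pow_le_pow_left (by omega) _).trans (Nat.pow_le_pow_right (by omega) (Nat.sub_le c w))

theorem exists_mul_list_prod_eq_list_prod_mul_mul (hU : iteratedCommutators U c ⊆ {1}) {x : G}
    (hx : x ∈ U) {u : List G} (hu : ∀ y ∈ u, y ∈ U) {N : ℕ} (huN : u.length ≤ N) :
    ∃ τ ∈ monoidBall (commutatorLetters U c) (u.length * (N + 1) ^ c),
      x * u.prod = u.prod * x * τ := by
  induction u with
  | nil => exact ⟨1, one_mem_monoidBall _ _, by simp⟩
  | cons y u ih =>
    have hy : y ∈ U := hu y List.mem_cons_self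
    have hu' : ∀ x ∈ u, x ∈ U := fun t ht => hu t (List.mem_cons_of_mem y ht)
    rw [List.length_cons] at huN ⊢
    rw [List.prod_cons]
    obtain ⟨τ, hτ, hxu⟩ := ih hu' (by omega)
    set P := u.prod
    have hz : ⁅x⁻¹, y⁻¹⁆ ∈ iteratedCommutators U (0 + 1) := ⟨x, hx, y, hy, rfl⟩
    have hconj := conj_list_prod_mem_monoidBall_commutatorLetters hU hu' hz
    refine ⟨τ * (P⁻¹ * ⁅x⁻¹, y⁻¹⁆ * P),
      monoidBall_mono ?_ (mul_mem_monoidBall hτ hconj), ?_⟩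
    · rw [Nat.sub_zero, Nat.succ_mul]
      gcongr
      omega
    · calc x * (y * P) = y * (x * P) * (P⁻¹ * ⁅x⁻¹, y⁻¹⁆ * P) := by
            simp only [commutatorElement_def]; group
        _ = y * P * x * (τ * (P⁻¹ * ⁅x⁻¹, y⁻¹⁆ * P)) := by rw [hxu]; group

theorem exists_mul_powerProduct_eq_powerProduct_mul (hU : iteratedCommutators U c ⊆ {1})
    {L : List G} (hL : ∀ y ∈ L, y ∈ U) {x : G} (hx : x ∈ L) {a : List ℕ}
    (ha : a.length = L.length) {N : ℕ} (hN : a.sum ≤ N) :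
    ∃ a' : List ℕ, a'.length = L.length ∧ a'.sum = a.sum + 1 ∧
      ∃ τ ∈ monoidBall (commutatorLetters U c) (a.sum * (N + 1) ^ (2 * c)),
        x * powerProduct L a = powerProduct L a' * τ := by
  induction L generalizing a with
  | nil => simp at hx
  | cons y L ih =>
    obtain _ | ⟨k, a⟩ := a
    · simp at ha
    simp only [List.length_cons, add_left_inj, List.sum_cons] at ha hN ⊢
    have hL' : ∀ y ∈ L, y ∈ U := fun t ht => hL t (List.mem_cons_of_mem y ht)
    by_cases hxy : x = y
    · subst hxy
      refine ⟨(k + 1) :: a, by simpa, by simp; omega, 1, one_mem_monoidBall _ _, ?_⟩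
      simp [pow_succ', mul_assoc]
    have hxL : x ∈ L := (List.mem_cons.1 hx).resolve_left hxy
    obtain ⟨a', ha', hsum', τ₁, hτ₁, hxP⟩ := ih hL' hxL ha (by omega)
    have hyk : ∀ t ∈ List.replicate k y, t ∈ U :=
      fun t ht => List.eq_of_mem_replicate ht ▸ hL y List.mem_cons_self
    obtain ⟨τ₀, hτ₀, hcomm⟩ :=
      exists_mul_list_prod_eq_list_prod_mul_mul hU (hL' x hxL) hyk (N := N) (by simp; omega)
    rw [List.prod_replicate] at hcomm
    rw [List.length_replicate] at hτ₀
    set P := powerProduct L a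
    have hP : P ∈ monoidBall U N := monoidBall_mono (by omega) (powerProduct_mem_monoidBall hL' a)
    have hconj := conj_mem_monoidBall_commutatorLetters hU hP hτ₀
    refine ⟨k :: a', by simpa, by simp [hsum']; omega, τ₁ * (P⁻¹ * τ₀ * P),
      monoidBall_mono (le_of_eq ?_) (mul_mem_monoidBall hτ₁ hconj), ?_⟩
    · ring
    · rw [powerProduct_cons, powerProduct_cons]
      calc x * (y ^ k * P) = y ^ k * (x * P) * (P⁻¹ * τ₀ * P) := by
            rw [← mul_assoc x, hcomm]; group
        _ = _ := by rw [hxP]; group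

theorem exists_list_prod_eq_powerProduct_mul (hU : iteratedCommutators U c ⊆ {1})
    {L : List G} (hL : ∀ y ∈ L, y ∈ U) (hUL : ∀ x ∈ U, x ∈ L) {u : List G}
    (hu : ∀ x ∈ u, x ∈ U) {N : ℕ} (huN : u.length ≤ N) :
    ∃ a : List ℕ, a.length = L.length ∧ a.sum = u.length ∧
      ∃ τ ∈ monoidBall (commutatorLetters U c) (u.length * (N + 1) ^ (2 * c + 1)),
        u.prod = powerProduct L a * τ := by
  induction u with
  | nil =>
    exact ⟨List.replicate L.length 0, by simp, by simp, 1, one_mem_monoidBall _ _,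
      by simp [powerProduct_replicate_zero]⟩
  | cons x u ih =>
    have hx : x ∈ U := hu x List.mem_cons_self
    have hu' : ∀ x ∈ u, x ∈ U := fun t ht => hu t (List.mem_cons_of_mem x ht)
    rw [List.length_cons] at huN ⊢
    obtain ⟨a, ha, hsum, τ, hτ, hprod⟩ := ih hu' (by omega)
    obtain ⟨a', ha', hsum', τ', hτ', hxP⟩ :=
      exists_mul_powerProduct_eq_powerProduct_mul hU hL (hUL x hx) ha (N := N) (by omega)
    refine ⟨a', ha', by rw [hsum', hsum], τ' * τ,
      monoidBall_mono ?_ (mul_mem_monoidBall hτ' hτ), ?_⟩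
    · rw [hsum, add_one_mul, add_comm, pow_succ _ (2 * c), mul_comm _ (N + 1)]
      gcongr
      omega
    · rw [List.prod_cons, hprod, ← mul_assoc, hxP, mul_assoc]

theorem monoidBall_subset_powerProducts_mul (hU : iteratedCommutators U c ⊆ {1})
    {L : List G} (hL : ∀ y ∈ L, y ∈ U) (hUL : ∀ x ∈ U, x ∈ L) (N : ℕ) :
    monoidBall U N ⊆
      powerProducts L N * monoidBall (commutatorLetters U c) (N * (N + 1) ^ (2 * c + 1)) := by
  rintro _ ⟨u, huN, hu, rfl⟩
  obtain ⟨a, ha, hsum, τ, hτ, hprod⟩ := exists_list_prod_eq_powerProduct_mul hU hL hUL hu huN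
  have hbound : ∀ k ∈ a, k < N + 1 := fun k hk => by
    have := List.le_sum_of_mem hk
    omega
  refine hprod ▸ Set.mul_mem_mul ⟨⟨a.pmap Fin.mk hbound, by simpa using ha⟩, ?_⟩
    (monoidBall_mono (by gcongr) hτ)
  simp [List.map_pmap]

end Collection

/-- Meaningful only for finite `T`: `Nat.card` of an infinite ball is `0`. -/
def HasPolynomialGrowth (T : Set G) : Prop :=
  ∃ C k : ℕ, ∀ n, Nat.card (monoidBall T n) ≤ C * (n + 1) ^ k

theorem hasPolynomialGrowth_empty : HasPolynomialGrowth (∅ : Set G) := by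
  refine ⟨1, 0, fun n => ?_⟩
  have hball : monoidBall (∅ : Set G) n ⊆ {1} := by
    rintro _ ⟨l, -, hl, rfl⟩
    simp [List.eq_nil_iff_forall_not_mem.2 hl]
  simpa using Nat.card_mono (Set.finite_singleton 1) hball

theorem HasPolynomialGrowth.exists_card_le {T : Set G} (h : HasPolynomialGrowth T) :
    ∃ C k : ℕ, 0 < C ∧ ∀ r : ℕ, 1 ≤ r → Nat.card (monoidBall T r) ≤ C * r ^ k := by
  obtain ⟨C, k, hC⟩ := h
  refine ⟨C * 2 ^ k + 1, k, Nat.succ_pos _, fun r hr => ?_⟩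
  calc Nat.card (monoidBall T r) ≤ C * (r + 1) ^ k := hC r
    _ ≤ C * (2 * r) ^ k := by gcongr; omega
    _ ≤ (C * 2 ^ k + 1) * r ^ k := by rw [mul_pow, ← mul_assoc]; gcongr; omega

theorem hasPolynomialGrowth_of_commutatorLetters {U : Set G} {c : ℕ} (hUfin : U.Finite)
    (hU : iteratedCommutators U c ⊆ {1}) (hZ : HasPolynomialGrowth (commutatorLetters U c)) :
    HasPolynomialGrowth U := by
  obtain ⟨C, k, hC⟩ := hZ
  set L := hUfin.toFinset.toList
  have hL : ∀ x ∈ L, x ∈ U := by simp [L]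
  have hUL : ∀ x ∈ U, x ∈ L := by simp [L]
  refine ⟨C, L.length + (2 * c + 2) * k, fun N => ?_⟩
  set M := N * (N + 1) ^ (2 * c + 1)
  have hM : M + 1 ≤ (N + 1) ^ (2 * c + 2) := by
    rw [pow_succ', add_one_mul]
    exact Nat.add_le_add_left (Nat.one_le_pow _ _ N.succ_pos) M
  have hfin : (powerProducts L N * monoidBall (commutatorLetters U c) M).Finite :=
    (Set.finite_range _).mul (monoidBall_finite (commutatorLetters_finite hUfin c) M)
  calc Nat.card (monoidBall U N)
      ≤ Nat.card (powerProducts L N * monoidBall (commutatorLetters U c) M) :=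
        Nat.card_mono hfin (monoidBall_subset_powerProducts_mul hU hL hUL N)
    _ ≤ (N + 1) ^ L.length * (C * (M + 1) ^ k) :=
        Set.natCard_mul_le.trans (Nat.mul_le_mul (card_powerProducts_le L N) (hC M))
    _ ≤ (N + 1) ^ L.length * (C * ((N + 1) ^ (2 * c + 2)) ^ k) := by gcongr
    _ = C * (N + 1) ^ (L.length + (2 * c + 2) * k) := by
        rw [← pow_mul, mul_left_comm, ← pow_add]

theorem Subgroup.lowerCentralSeries_lowerCentralSeries_one_le (S : Subgroup G) (n : ℕ) :
    (S.lowerCentralSeries 1).lowerCentralSeries n ≤ S.lowerCentralSeries (n + 1) := by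
  induction n with
  | zero => exact le_rfl
  | succ n ih => exact Subgroup.commutator_mono ih (S.lowerCentralSeries_le_self 1)

theorem iteratedCommutators_subset_one_of_lowerCentralSeries_eq_bot {S : Subgroup G}
    {U : Set G} (hUS : U ⊆ S) {c : ℕ} (hS : S.lowerCentralSeries c = ⊥) :
    iteratedCommutators U c ⊆ {1} := by
  simpa [hS] using iteratedCommutators_subset_lowerCentralSeries hUS c

theorem hasPolynomialGrowth_of_lowerCentralSeries_eq_bot {S : Subgroup G} {c : ℕ}
    (hS : S.lowerCentralSeries c = ⊥) {U : Set G} (hUS : U ⊆ S) (hU : U.Finite) :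
    HasPolynomialGrowth U := by
  induction c generalizing S U with
  | zero =>
    refine hasPolynomialGrowth_of_commutatorLetters hU
      (iteratedCommutators_subset_one_of_lowerCentralSeries_eq_bot hUS hS) ?_
    simpa [commutatorLetters] using hasPolynomialGrowth_empty
  | succ c ih =>
    refine hasPolynomialGrowth_of_commutatorLetters hU
      (iteratedCommutators_subset_one_of_lowerCentralSeries_eq_bot hUS hS) ?_
    exact ih (eq_bot_iff.2 (hS ▸ S.lowerCentralSeries_lowerCentralSeries_one_le c))
      (commutatorLetters_subset_lowerCentralSeries_one hUS _) (commutatorLetters_finite hU _)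

theorem monoidBall_subset_monoidBall_mul {T U R : Set G} (hR1 : 1 ∈ R) (hRT : R * T ⊆ U * R)
    (n : ℕ) : monoidBall T n ⊆ monoidBall U n * R := by
  suffices ∀ l : List G, (∀ t ∈ l, t ∈ T) → ∀ r ∈ R,
      r * l.prod ∈ monoidBall U l.length * R by
    rintro _ ⟨l, hl, hT, rfl⟩
    obtain ⟨u, hu, r, hr, hur⟩ := this l hT 1 hR1
    exact ⟨u, monoidBall_mono hl hu, r, hr, by simpa using hur⟩
  intro l hT
  induction l with
  | nil => exact fun r hr => ⟨1, one_mem_monoidBall _ _, r, hr, by simp⟩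
  | cons t l ih =>
    intro r hr
    obtain ⟨u, hu, r', hr', hurt⟩ :=
      Set.mem_mul.1 (hRT (Set.mul_mem_mul hr (hT t List.mem_cons_self)))
    obtain ⟨v, hv, r'', hr'', hvr⟩ :=
      Set.mem_mul.1 (ih (fun x hx => hT x (List.mem_cons_of_mem t hx)) r' hr')
    refine Set.mem_mul.2 ⟨u * v, ?_, r'', hr'', ?_⟩
    · simpa [add_comm] using mul_mem_monoidBall (mem_monoidBall_one hu) hv
    · rw [mul_assoc, hvr, ← mul_assoc, hurt, List.prod_cons, mul_assoc]

theorem hasPolynomialGrowth_of_finiteIndex {H : Subgroup G} [H.FiniteIndex]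
    (hH : ∀ U ⊆ (H : Set G), U.Finite → HasPolynomialGrowth U) {T : Set G} (hT : T.Finite) :
    HasPolynomialGrowth T := by
  obtain ⟨R, hR, hR1⟩ := Subgroup.exists_isComplement_right H 1
  have hRfin : R.Finite := hR.finite_right
  set U := (H : Set G) ∩ (R * T * R⁻¹)
  have hRT : R * T ⊆ U * R := by
    rintro _ ⟨r, hr, t, ht, rfl⟩
    obtain ⟨⟨⟨h, hh⟩, ⟨r', hr'⟩⟩, hrt : h * r' = r * t⟩ := hR.2 (r * t)
    refine Set.mem_mul.2 ⟨h, Set.mem_inter hh ?_, r', hr', hrt⟩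
    rw [eq_mul_inv_of_mul_eq hrt]
    exact Set.mul_mem_mul (Set.mul_mem_mul hr ht) (Set.inv_mem_inv.2 hr')
  have hUfin : U.Finite := ((hRfin.mul hT).mul hRfin.inv).inter_of_right (H : Set G)
  obtain ⟨C, k, hC⟩ := hH U Set.inter_subset_left hUfin
  refine ⟨C * Nat.card R, k, fun n => ?_⟩
  calc Nat.card (monoidBall T n) ≤ Nat.card (monoidBall U n * R) :=
        Nat.card_mono ((monoidBall_finite hUfin n).mul hRfin)
          (monoidBall_subset_monoidBall_mul hR1 hRT n)
    _ ≤ C * (n + 1) ^ k * Nat.card R := Set.natCard_mul_le.trans (Nat.mul_le_mul_right _ (hC n))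
    _ = C * Nat.card R * (n + 1) ^ k := by ring

theorem cosetGroup_polynomial_growth_general (S : Set G) (hSfin : S.Finite)
    (H : Subgroup G) (hHfi : H.FiniteIndex) (hHnilp : Group.IsNilpotent H)
    (A : Subgroup (MulAut G)) (hAfin : Finite A) :
    ∃ C k : ℕ, 0 < C ∧ ∀ r : ℕ, 1 ≤ r →
      Nat.card (orbitMap A '' monoidBall {x | ∃ s ∈ S, ∃ a ∈ A, a s = x} r) ≤ C * r ^ k := by
  set T : Set G := {x | ∃ s ∈ S, ∃ a ∈ A, a s = x}
  have hT : T.Finite := by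
    refine ((Set.finite_coe_iff.1 hAfin).image2 (fun a s => a s) hSfin).subset ?_
    rintro _ ⟨s, hs, a, ha, rfl⟩
    exact ⟨a, ha, s, hs, rfl⟩
  obtain ⟨c, hc⟩ := (Subgroup.isNilpotent_iff_lowerCentralSeries H).1 hHnilp
  obtain ⟨C, k, hC, hball⟩ := (hasPolynomialGrowth_of_finiteIndex
    (fun U hUH hU => hasPolynomialGrowth_of_lowerCentralSeries_eq_bot hc hUH hU) hT).exists_card_le
  exact ⟨C, k, hC, fun r hr => (Nat.card_image_le (monoidBall_finite hT r)).trans (hball r hr)⟩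

/-- The coset group of a finitely generated virtually nilpotent group by a finite group of
automorphisms has polynomial growth: the number of `A`-orbits meeting `B⁺_T(r)` (i.e. the
cardinality of the ball of radius `r` at the unit of the coset group) is at most `C·r^k`. -/
theorem cosetGroup_polynomial_growth (S : Set G) (hSfin : S.Finite)
    (hSsym : ∀ s ∈ S, s⁻¹ ∈ S) (hSgen : Subgroup.closure S = ⊤)
    (H : Subgroup G) (hHfi : H.FiniteIndex) (hHnilp : Group.IsNilpotent H)
    (A : Subgroup (MulAut G)) (hAfin : Finite A) :
    ∃ C k : ℕ, 0 < C ∧ ∀ r : ℕ, 1 ≤ r →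
      Nat.card (orbitMap A '' monoidBall {x | ∃ s ∈ S, ∃ a ∈ A, a s = x} r) ≤ C * r ^ k :=
  cosetGroup_polynomial_growth_general S hSfin H hHfi hHnilp A hAfin
end

section
/- Let G be a group, A a finite subgroup of Aut(G) with n = Nat.card A, and g, h ∈ G. Put T = {a(g) : a ∈ A} and ξ(r) = Nat.card (π '' (h · W_r(T))). Then for every r ≥ 1, Nat.card (S⁺_T(r)) ≤ n · ξ(r); that is, the growth function of the dynamic T_z at y in the coset group X = (G, A) (with z = π(g), y = π(h)) is bounded below by (1/n) times the cardinality of the sphere of radius r in the submonoid of G generated by T. -/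
variable {G : Type*} [Group G]

lemma wordSet_finite {T : Set G} (hT : T.Finite) (r : ℕ) : (wordSet T r).Finite := by
  induction r with
  | zero =>
    refine Set.Finite.subset (Set.finite_singleton 1) ?_
    rintro x ⟨l, hl, -, hp⟩
    simp only [List.length_eq_zero_iff] at hl
    subst hl
    simp [← hp]
  | succ n ih =>
    refine Set.Finite.subset (Set.Finite.image2 (· * ·) hT ih) ?_
    rintro x ⟨l, hl, hm, hp⟩
    cases l with
    | nil => simp at hl
    | cons a l' =>
      refine ⟨a, hm a (by simp), l'.prod, ⟨l', ?_, fun t ht => hm t (by simp [ht]), rfl⟩, by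
        simp [← hp]⟩
      simpa using hl

/-- The growth function `ξ(r) = Nat.card (π '' (h · W_r(T)))` of the dynamic `T_z` on the
coset group `X = (G, A)` is bounded below by `(1/n)` times the cardinality of the monoid
sphere `S⁺_T(r)`, where `n = Nat.card A`. -/
theorem monoidSphere_le_card_mul_dynamic_growth (A : Subgroup (MulAut G)) (hAfin : Finite A)
    (g h : G) (r : ℕ) (hr : 1 ≤ r) :
    Nat.card (monoidSphere {x | ∃ a ∈ A, a g = x} r) ≤
      Nat.card A *
        Nat.card (orbitMap A '' ((fun w => h * w) '' wordSet {x | ∃ a ∈ A, a g = x} r)) := by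
  classical
  set T : Set G := {x | ∃ a ∈ A, a g = x} with hTdef
  have hAs : (A : Set (MulAut G)).Finite := Set.toFinite _
  have hT : T.Finite := by
    have : T = (fun a : MulAut G => a g) '' (A : Set (MulAut G)) := by
      ext x; simp [hTdef, Set.mem_image, eq_comm]
    rw [this]; exact hAs.image _
  have hW : (wordSet T r).Finite := wordSet_finite hT r
  -- the sphere is contained in the word set of length exactly r
  have hSub : monoidSphere T r ⊆ wordSet T r := by
    rintro x ⟨⟨l, hl, hm, hp⟩, hx2⟩
    refine ⟨l, ?_, hm, hp⟩
    by_contra hne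
    exact hx2 ⟨l, by omega, hm, hp⟩
  have hS : (monoidSphere T r).Finite := hW.subset hSub
  have hF : (orbitMap A '' ((fun w => h * w) '' wordSet T r)).Finite := ((hW.image _).image _)
  -- orbits have at most `Nat.card A` elements
  have horb : ∀ y : G, Nat.card (orbitMap A y) ≤ Nat.card A := by
    intro y
    have : orbitMap A y = (fun a : MulAut G => a y) '' (A : Set (MulAut G)) := by
      ext x; simp [orbitMap, Set.mem_image]
    rw [this]
    calc Nat.card ((fun a : MulAut G => a y) '' (A : Set (MulAut G)))
        ≤ Nat.card (A : Set (MulAut G)) := Nat.card_image_le hAs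
      _ = Nat.card A := by simp
  -- pass to finsets
  set f : G → Set G := fun x => orbitMap A (h * x) with hfdef
  have hmaps : ∀ x ∈ hS.toFinset, f x ∈ hF.toFinset := by
    intro x hx
    rw [Set.Finite.mem_toFinset] at hx ⊢
    exact ⟨h * x, ⟨x, hSub hx, rfl⟩, rfl⟩
  have hfib : ∀ b ∈ hF.toFinset, (hS.toFinset.filter fun x => f x = b).card ≤ Nat.card A := by
    intro b hb
    have hbfin : b.Finite := by
      rw [Set.Finite.mem_toFinset] at hb
      obtain ⟨y, -, rfl⟩ := hb
      have : (orbitMap A y) = (fun a : MulAut G => a y) '' (A : Set (MulAut G)) := by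
        ext x; simp [orbitMap, Set.mem_image]
      rw [this]; exact hAs.image _
    have hbcard : Nat.card b ≤ Nat.card A := by
      rw [Set.Finite.mem_toFinset] at hb
      obtain ⟨y, -, rfl⟩ := hb
      exact horb y
    -- the map x ↦ h * x injects the fiber into b
    have hinj : ∀ x ∈ hS.toFinset.filter fun x => f x = b, h * x ∈ hbfin.toFinset := by
      intro x hx
      rw [Finset.mem_filter] at hx
      rw [Set.Finite.mem_toFinset, ← hx.2]
      exact ⟨1, one_mem A, rfl⟩
    calc (hS.toFinset.filter fun x => f x = b).card
        = ((hS.toFinset.filter fun x => f x = b).image fun x => h * x).card :=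
          (Finset.card_image_of_injective _ (mul_right_injective h)).symm
      _ ≤ hbfin.toFinset.card := Finset.card_le_card (by
          intro y hy
          obtain ⟨x, hx, rfl⟩ := Finset.mem_image.mp hy
          exact hinj x hx)
      _ = Nat.card b := by rw [← Set.ncard_eq_toFinset_card _ hbfin, Nat.card_coe_set_eq]
      _ ≤ Nat.card A := hbcard
  have key := Finset.card_le_mul_card_image_of_maps_to hmaps (Nat.card A) hfib
  calc Nat.card (monoidSphere T r) = hS.toFinset.card := by
        rw [Nat.card_coe_set_eq, Set.ncard_eq_toFinset_card _ hS]
    _ ≤ Nat.card A * hF.toFinset.card := key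
    _ = Nat.card A * Nat.card (orbitMap A '' ((fun w => h * w) '' wordSet T r)) := by
        rw [Nat.card_coe_set_eq, Set.ncard_eq_toFinset_card _ hF]
end

section
/- Let H be a finite group, K a group, and G = H × K. Let A be a finite subgroup of Aut(G) such that every a ∈ A preserves the second coordinate, i.e. (a(x)).2 = x.2 for all x ∈ G. Then for all g, h ∈ G and every natural number r ≥ 1, putting T = {a(g) : a ∈ A}, the number of A-orbits meeting h·W_r(T) is at most Nat.card H; consequently no dynamic T_z on the coset group X = (G, A) has exponential growth, even when K (e.g. a free group of rank 2) makes G a group of exponential growth. -/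
variable {G : Type*} [Group G]

/-- If `G = H × K` with `H` finite and every automorphism in `A` preserves the second
coordinate, then every dynamic on the coset group `X = (G, A)` has growth function bounded
by `Nat.card H`; in particular no dynamic has exponential growth. -/
theorem dynamic_growth_le_of_prod (H K : Type*) [Group H] [Group K] [Finite H]
    (A : Subgroup (MulAut (H × K))) (hAfin : Finite A)
    (hA : ∀ a ∈ A, ∀ x : H × K, (a x).2 = x.2)
    (g h : H × K) (r : ℕ) (hr : 1 ≤ r) :
    Nat.card (orbitMap A '' ((fun w => h * w) '' wordSet {x | ∃ a ∈ A, a g = x} r)) ≤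
      Nat.card H := by
  set T : Set (H × K) := {x | ∃ a ∈ A, a g = x}
  set S : Set (H × K) := (fun w => h * w) '' wordSet T r with hS
  set c : K := h.2 * g.2 ^ r
  have hinj : Function.Injective
      (fun x : {x : H × K | x.2 = c} => (x : H × K).1) := by
    rintro ⟨⟨a1, a2⟩, ha⟩ ⟨⟨b1, b2⟩, hb⟩ hab
    simp only [Set.mem_setOf_eq] at ha hb
    simp_all [Prod.ext_iff]
  have hsliceCard : Nat.card {x : H × K | x.2 = c} ≤ Nat.card H :=
    Nat.card_le_card_of_injective _ hinj
  have hsliceFin : ({x : H × K | x.2 = c} : Set (H × K)).Finite :=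
    Set.finite_coe_iff.mp (Finite.of_injective _ hinj)
  have hsub : S ⊆ {x : H × K | x.2 = c} := by
    rintro _ ⟨w, ⟨l, hl, hlT, rfl⟩, rfl⟩
    have hsnd : ∀ t ∈ l, t.2 = g.2 := by
      intro t ht
      obtain ⟨a, ha, rfl⟩ := hlT t ht
      exact hA a ha g
    have : (l.map Prod.snd).prod = g.2 ^ r := by
      calc (l.map Prod.snd).prod = (l.map fun _ => g.2).prod := by
            congr 1; exact List.map_congr_left hsnd
        _ = g.2 ^ l.length := by
            simp [List.map_const', List.prod_replicate]
        _ = g.2 ^ r := by rw [hl]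
    show (h * l.prod).2 = c
    have h2 : l.prod.2 = (l.map Prod.snd).prod := by
      simpa using map_list_prod (MonoidHom.snd H K) l
    rw [Prod.snd_mul, h2, this]
  have hSfin : S.Finite := hsliceFin.subset hsub
  calc Nat.card (orbitMap A '' S) ≤ Nat.card S := Nat.card_image_le hSfin
    _ ≤ Nat.card {x : H × K | x.2 = c} := Nat.card_mono hsliceFin hsub
    _ ≤ Nat.card H := hsliceCard
end
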